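/- arXiv:1904.11019 — 2 statements merged into one kernel-verified Lean document; each statement's English description precedes it below -/
import Mathlib

section
/- Fix a period d > 0, an offset d₀ ∈ (0, d), and k ∈ (0, 2π/d), and take κ = 0, so that κ_n = 2πn/d, ζ₀ = k and ζ_n = i·√((2πn/d)² − k²) for n ≠ 0. Suppose b⁺, b⁻ ∈ ℂ are such that the symmetric partial sums −(i/d)·Σ_{n=−N}^{N} e^{+i κ_n d₀}/ζ_n and −(i/d)·Σ_{n=−N}^{N} e^{−i κ_n d₀}/ζ_n converge to b⁺ and b⁻ respectively as N → ∞. Then b⁺ = b⁻, and b⁺ + i/(d·k) is a real number. -/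
open Real Filter Topology

/-- `κ_n = κ + 2πn/d`. -/
noncomputable def kapN (d κ : ℝ) (n : ℤ) : ℝ := κ + 2 * π * n / d

/-- `ζ₀ = √(k² − κ²)` and `ζ_n = i√(κ_n² − k²)` for `n ≠ 0`. -/
noncomputable def zetaN (d k κ : ℝ) (n : ℤ) : ℂ :=
  if n = 0 then ((Real.sqrt (k ^ 2 - κ ^ 2) : ℝ) : ℂ)
  else Complex.I * ((Real.sqrt ((kapN d κ n) ^ 2 - k ^ 2) : ℝ) : ℂ)

/-- The diamond region `D₁ = {(κ,k) : |κ| < π/d, 0 < k < |κ + 2πn/d| ∀ n ≠ 0}`. -/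
def D1 (d : ℝ) : Set (ℝ × ℝ) :=
  {p : ℝ × ℝ | |p.1| < π / d ∧ 0 < p.2 ∧
    ∀ n : ℤ, n ≠ 0 → p.2 < |p.1 + 2 * π * n / d|}

/-- `β_e(k, κ, ε) = (1/π) log(2πε/d) + Σ_{n≠0} (1/(2π|n|) − i/(d ζ_n)) − i/(d ζ₀)`. -/
noncomputable def betaE (d k κ ε : ℝ) : ℂ :=
  ((1 / π * Real.log (2 * π * ε / d) : ℝ) : ℂ)
    + (∑' n : {n : ℤ // n ≠ 0},
        (((1 / (2 * π * |(n.1 : ℝ)|) : ℝ) : ℂ) - Complex.I / ((d : ℂ) * zetaN d k κ n.1)))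
    - Complex.I / ((d : ℂ) * zetaN d k κ 0)

/-!
Replacing `n` by `-n` fixes `ζ_n` and flips the sign of `κ_n`, so the two symmetric partial sums
coincide and `b⁺ = b⁻`. Since `ζ_n` is purely imaginary for `n ≠ 0`, complex conjugation sends the
`b⁺` partial sums to the `b⁻` partial sums, up to the `n = 0` term `-i/(dk)`, whose conjugate is
its negative. Passing to the limit, `conj b⁺ = b⁻ + 2i/(dk) = b⁺ + 2i/(dk)`, i.e. `b⁺ + i/(dk)`
is its own conjugate.
-/

open Complex ComplexConjugate Finset

theorem Finset.sum_Icc_comp_neg {M : Type*} [AddCommMonoid M] (f : ℤ → M) (N : ℤ) :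
    ∑ n ∈ Icc (-N) N, f (-n) = ∑ n ∈ Icc (-N) N, f n :=
  sum_equiv (Equiv.neg ℤ) (fun n => by simp only [mem_Icc, Equiv.neg_apply]; omega)
    (fun _ _ => rfl)

lemma kapN_zero_neg (d : ℝ) (n : ℤ) : kapN d 0 (-n) = -kapN d 0 n := by
  simp only [kapN, Int.cast_neg]
  ring

lemma zetaN_zero_neg (d k : ℝ) (n : ℤ) : zetaN d k 0 (-n) = zetaN d k 0 n := by
  simp only [zetaN, neg_eq_zero, kapN_zero_neg, neg_sq]

lemma zetaN_zero_zero (d : ℝ) {k : ℝ} (hk : 0 ≤ k) : zetaN d k 0 0 = k := by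
  simp [zetaN, Real.sqrt_sq hk]

lemma conj_zetaN_of_ne_zero (d k κ : ℝ) {n : ℤ} (hn : n ≠ 0) :
    conj (zetaN d k κ n) = -zetaN d k κ n := by
  simp [zetaN, hn]

section PartialSums

variable (d d₀ : ℝ) {k : ℝ}

lemma sum_Icc_exp_neg_div_zetaN (N : ℕ) :
    ∑ n ∈ Icc (-(N : ℤ)) N, exp (-(I * ((kapN d 0 n * d₀ : ℝ) : ℂ))) / zetaN d k 0 n =
      ∑ n ∈ Icc (-(N : ℤ)) N, exp (I * ((kapN d 0 n * d₀ : ℝ) : ℂ)) / zetaN d k 0 n := by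
  rw [← sum_Icc_comp_neg]
  simp only [kapN_zero_neg, zetaN_zero_neg, neg_mul, ofReal_neg, mul_neg, neg_neg]

lemma conj_exp_div_zetaN (hk : 0 ≤ k) (n : ℤ) :
    conj (exp (I * ((kapN d 0 n * d₀ : ℝ) : ℂ)) / zetaN d k 0 n) =
      -(exp (-(I * ((kapN d 0 n * d₀ : ℝ) : ℂ))) / zetaN d k 0 n) +
        if n = 0 then 2 / (k : ℂ) else 0 := by
  rcases eq_or_ne n 0 with rfl | hn
  · simp only [kapN, Int.cast_zero, mul_zero, zero_div, add_zero, zero_mul, ofReal_zero,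
      Complex.exp_zero, zetaN_zero_zero d hk, one_div, map_inv₀, conj_ofReal, neg_zero,
      if_true]
    ring
  · rw [map_div₀, conj_zetaN_of_ne_zero d k 0 hn, ← exp_conj, if_neg hn]
    simp only [map_mul, conj_I, conj_ofReal, neg_mul, div_neg, add_zero]

lemma conj_partial_sum_exp_div_zetaN (hk : 0 ≤ k) (N : ℕ) :
    conj ((-I / (d : ℂ)) * ∑ n ∈ Icc (-(N : ℤ)) N,
        exp (I * ((kapN d 0 n * d₀ : ℝ) : ℂ)) / zetaN d k 0 n) =
      (-I / (d : ℂ)) * ∑ n ∈ Icc (-(N : ℤ)) N,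
        exp (-(I * ((kapN d 0 n * d₀ : ℝ) : ℂ))) / zetaN d k 0 n + 2 * (I / (d * k)) := by
  rw [map_mul, map_sum]
  simp only [conj_exp_div_zetaN d d₀ hk, sum_add_distrib, sum_neg_distrib, sum_ite_eq',
    mem_Icc, Left.neg_nonpos_iff, Nat.cast_nonneg, and_self, if_true]
  simp only [map_div₀, map_neg, conj_I, conj_ofReal]
  ring

end PartialSums

theorem stmt_9_general (d d₀ k : ℝ) (hk0 : 0 < k) (bp bm : ℂ)
    (hbp : Tendsto (fun N : ℕ =>
        (-Complex.I / (d : ℂ)) * ∑ n ∈ Finset.Icc (-(N : ℤ)) (N : ℤ),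
          Complex.exp (Complex.I * ((kapN d 0 n * d₀ : ℝ) : ℂ)) / zetaN d k 0 n)
      atTop (nhds bp))
    (hbm : Tendsto (fun N : ℕ =>
        (-Complex.I / (d : ℂ)) * ∑ n ∈ Finset.Icc (-(N : ℤ)) (N : ℤ),
          Complex.exp (-(Complex.I * ((kapN d 0 n * d₀ : ℝ) : ℂ))) / zetaN d k 0 n)
      atTop (nhds bm)) :
    bp = bm ∧ (bp + Complex.I / ((d : ℂ) * (k : ℂ))).im = 0 := by
  have hsymm : bp = bm :=
    tendsto_nhds_unique hbp (by simpa only [sum_Icc_exp_neg_div_zetaN] using hbm)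
  have hconj : conj bp = bm + 2 * (I / (d * k)) :=
    tendsto_nhds_unique ((continuous_conj.tendsto bp).comp hbp)
      (by simpa only [Function.comp_def, conj_partial_sum_exp_div_zetaN d d₀ hk0.le]
        using hbm.add_const _)
  refine ⟨hsymm, conj_eq_iff_im.mp ?_⟩
  rw [map_add, hconj, ← hsymm, map_div₀, map_mul, conj_I, conj_ofReal, conj_ofReal]
  ring

/-- Fix `d > 0`, `d₀ ∈ (0,d)`, `k ∈ (0, 2π/d)` and take `κ = 0`.
If the symmetric partial sums `-(i/d) Σ_{n=-N}^N e^{±iκ_n d₀}/ζ_n` converge to `b⁺`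
resp. `b⁻`, then `b⁺ = b⁻` and `b⁺ + i/(dk)` is real. -/
theorem stmt_9 (d d₀ k : ℝ) (hd : 0 < d) (hd₀ : 0 < d₀) (hd₀' : d₀ < d)
    (hk0 : 0 < k) (hk1 : k < 2 * π / d) (bp bm : ℂ)
    (hbp : Tendsto (fun N : ℕ =>
        (-Complex.I / (d : ℂ)) * ∑ n ∈ Finset.Icc (-(N : ℤ)) (N : ℤ),
          Complex.exp (Complex.I * ((kapN d 0 n * d₀ : ℝ) : ℂ)) / zetaN d k 0 n)
      atTop (nhds bp))
    (hbm : Tendsto (fun N : ℕ =>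
        (-Complex.I / (d : ℂ)) * ∑ n ∈ Finset.Icc (-(N : ℤ)) (N : ℤ),
          Complex.exp (-(Complex.I * ((kapN d 0 n * d₀ : ℝ) : ℂ))) / zetaN d k 0 n)
      atTop (nhds bm)) :
    bp = bm ∧ (bp + Complex.I / ((d : ℂ) * (k : ℂ))).im = 0 :=
  stmt_9_general d d₀ k hk0 bp bm hbp hbm
end

section
/- Fix a period d > 0, an offset d₀ ∈ (0, d), ε > 0, and (κ, k) ∈ D₁. Suppose b⁺, b⁻ ∈ ℂ are such that the symmetric partial sums −(i/d)·Σ_{n=−N}^{N} e^{+i κ_n d₀}/ζ_n and −(i/d)·Σ_{n=−N}^{N} e^{−i κ_n d₀}/ζ_n converge to b⁺ and b⁻ respectively as N → ∞. Then Im β_e(k, κ, ε) − (1/2)·Im(b⁺ + b⁻) = (cos(κ d₀) − 1)/(d·ζ₀); in particular Im β_e(k, κ, ε) = −1/(d·ζ₀), independently of ε. -/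
open Real Filter Topology

/-! For `n ≠ 0`, `ζ_n` is `i` times a real number, so `i / (d ζ_n)` is real. Hence every term of
the series in `β_e` is real, and so is every `n ≠ 0` term of the partial sums of `b⁺ + b⁻`, which
equal `-(i/d) Σ 2 cos(κ_n d₀) / ζ_n`. Only `n = 0` contributes imaginary parts: `-1/(d ζ₀)` to `β_e`
and `-2 cos(κ d₀)/(d ζ₀)` to every partial sum of `b⁺ + b⁻`, hence to its limit. -/

lemma Complex.im_tsum_eq_zero {ι : Type*} {f : ι → ℂ} (hf : ∀ i, (f i).im = 0) :
    (∑' i, f i).im = 0 := by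
  have hreal : f = fun i => ((f i).re : ℂ) := funext fun i => Complex.ext rfl (by simp [hf])
  rw [hreal, ← Complex.ofReal_tsum, Complex.ofReal_im]

lemma Complex.exp_I_mul_add_exp_neg_I_mul (x : ℝ) :
    Complex.exp (Complex.I * x) + Complex.exp (-(Complex.I * x)) = ((2 * Real.cos x : ℝ) : ℂ) := by
  rw [Complex.ofReal_mul, Complex.ofReal_cos, Complex.ofReal_ofNat, Complex.two_cos]
  ring_nf

lemma kapN_zero (d κ : ℝ) : kapN d κ 0 = κ := by simp [kapN]

lemma im_I_div_mul_zetaN (d k κ : ℝ) (n : ℤ) :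
    (Complex.I / (d * zetaN d k κ n)).im
      = if n = 0 then (d * Real.sqrt (k ^ 2 - κ ^ 2))⁻¹ else 0 := by
  unfold zetaN
  split_ifs with hn
  · rw [← Complex.ofReal_mul, Complex.div_ofReal_im, Complex.I_im, one_div]
  · rw [mul_left_comm, div_mul_cancel_left₀ Complex.I_ne_zero, ← Complex.ofReal_mul,
      ← Complex.ofReal_inv, Complex.ofReal_im]

lemma betaE_im (d k κ ε : ℝ) :
    (betaE d k κ ε).im = -(d * Real.sqrt (k ^ 2 - κ ^ 2))⁻¹ := by
  have hseries : (∑' n : {n : ℤ // n ≠ 0},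
      (((1 / (2 * π * |(n.1 : ℝ)|) : ℝ) : ℂ) - Complex.I / ((d : ℂ) * zetaN d k κ n.1))).im = 0 :=
    Complex.im_tsum_eq_zero fun n => by
      rw [Complex.sub_im, Complex.ofReal_im, im_I_div_mul_zetaN, if_neg n.2, sub_zero]
  rw [betaE, Complex.sub_im, Complex.add_im, hseries, Complex.ofReal_im, im_I_div_mul_zetaN,
    if_pos rfl]
  ring

lemma im_neg_I_div_mul_sum_exp_div_zetaN_add (d k κ : ℝ) (θ : ℤ → ℝ) {s : Finset ℤ}
    (hs : 0 ∈ s) :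
    ((-Complex.I / d) * ∑ n ∈ s, Complex.exp (Complex.I * θ n) / zetaN d k κ n
      + (-Complex.I / d) * ∑ n ∈ s, Complex.exp (-(Complex.I * θ n)) / zetaN d k κ n).im
      = -(2 * Real.cos (θ 0)) * (d * Real.sqrt (k ^ 2 - κ ^ 2))⁻¹ := by
  have hterm : ∀ n, (-Complex.I / d) * (Complex.exp (Complex.I * θ n) / zetaN d k κ n)
      + (-Complex.I / d) * (Complex.exp (-(Complex.I * θ n)) / zetaN d k κ n)
      = -(((2 * Real.cos (θ n) : ℝ) : ℂ) * (Complex.I / (d * zetaN d k κ n))) := fun n => by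
    rw [← Complex.exp_I_mul_add_exp_neg_I_mul]; ring
  rw [Finset.mul_sum, Finset.mul_sum, ← Finset.sum_add_distrib,
    Finset.sum_congr rfl fun n _ => hterm n, Complex.im_sum]
  simp only [Complex.neg_im, Complex.im_ofReal_mul, im_I_div_mul_zetaN, mul_ite, mul_zero,
    Finset.sum_neg_distrib, Finset.sum_ite_eq', if_pos hs]
  ring

theorem stmt_11_general (d d₀ ε κ k : ℝ) (bp bm : ℂ)
    (hbp : Tendsto (fun N : ℕ =>
        (-Complex.I / (d : ℂ)) * ∑ n ∈ Finset.Icc (-(N : ℤ)) (N : ℤ),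
          Complex.exp (Complex.I * ((kapN d κ n * d₀ : ℝ) : ℂ)) / zetaN d k κ n)
      atTop (nhds bp))
    (hbm : Tendsto (fun N : ℕ =>
        (-Complex.I / (d : ℂ)) * ∑ n ∈ Finset.Icc (-(N : ℤ)) (N : ℤ),
          Complex.exp (-(Complex.I * ((kapN d κ n * d₀ : ℝ) : ℂ))) / zetaN d k κ n)
      atTop (nhds bm)) :
    (betaE d k κ ε).im - (1 / 2) * (bp + bm).im
        = (Real.cos (κ * d₀) - 1) / (d * Real.sqrt (k ^ 2 - κ ^ 2)) ∧
      (betaE d k κ ε).im = -1 / (d * Real.sqrt (k ^ 2 - κ ^ 2)) := by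
  have hpartial := (Complex.continuous_im.tendsto _).comp (hbp.add hbm)
  have him : (bp + bm).im = -(2 * Real.cos (κ * d₀)) * (d * Real.sqrt (k ^ 2 - κ ^ 2))⁻¹ := by
    refine tendsto_nhds_unique hpartial (tendsto_const_nhds.congr fun N => ?_)
    rw [Function.comp_apply,
      im_neg_I_div_mul_sum_exp_div_zetaN_add d k κ (fun n => kapN d κ n * d₀)
        (Finset.mem_Icc.mpr ⟨by omega, by omega⟩), kapN_zero]
  rw [him, betaE_im]
  constructor <;> ring

/-- Fix `d > 0`, `d₀ ∈ (0,d)`, `ε > 0` and `(κ,k) ∈ D₁`. If the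
symmetric partial sums `-(i/d) Σ_{n=-N}^N e^{±iκ_n d₀}/ζ_n` converge to `b⁺` resp.
`b⁻`, then `Im β_e(k,κ,ε) − (1/2)Im(b⁺+b⁻) = (cos(κd₀) − 1)/(dζ₀)`; in particular
`Im β_e(k,κ,ε) = −1/(dζ₀)`, independently of `ε`. -/
theorem stmt_11 (d d₀ ε κ k : ℝ) (hd : 0 < d) (hd₀ : 0 < d₀) (hd₀' : d₀ < d)
    (hε : 0 < ε) (hD : (κ, k) ∈ D1 d) (bp bm : ℂ)
    (hbp : Tendsto (fun N : ℕ =>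
        (-Complex.I / (d : ℂ)) * ∑ n ∈ Finset.Icc (-(N : ℤ)) (N : ℤ),
          Complex.exp (Complex.I * ((kapN d κ n * d₀ : ℝ) : ℂ)) / zetaN d k κ n)
      atTop (nhds bp))
    (hbm : Tendsto (fun N : ℕ =>
        (-Complex.I / (d : ℂ)) * ∑ n ∈ Finset.Icc (-(N : ℤ)) (N : ℤ),
          Complex.exp (-(Complex.I * ((kapN d κ n * d₀ : ℝ) : ℂ))) / zetaN d k κ n)
      atTop (nhds bm)) :
    (betaE d k κ ε).im - (1 / 2) * (bp + bm).im
        = (Real.cos (κ * d₀) - 1) / (d * Real.sqrt (k ^ 2 - κ ^ 2)) ∧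
      (betaE d k κ ε).im = -1 / (d * Real.sqrt (k ^ 2 - κ ^ 2)) :=
  stmt_11_general d d₀ ε κ k bp bm hbp hbm
end
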